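/- Continued fraction expansion for the Fibonomial column generating function: fix an integer n ≥ 0 and set c_m = (−1)^m F_{n+2−m}/F_m for m = 1, …, n+1. In the ring of formal power series ℝ⟦x⟧, define g_{n+1} = 1 + c_{n+1} x and, for m = n, n−1, …, 1, define g_m = 1 + c_m x − c_{m+1} x · g_{m+1}^{−1} (each g_m has constant term 1, hence is invertible). Then for every integer 0 ≤ k ≤ n+1, the coefficient of x^k in the power series 1 − c_1 x · g_1^{−1} equals C(n+k, k)_F. -/

import Mathlib

/-!
Write `P_m = ∑ₖ c_m c_{m+1} ⋯ c_{m+k-1} xᵏ`, so that `P_m = 1 + c_m x P_{m+1}`. Because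
`c_{n+2} = 0` we have `P_{n+2} = 1`, and the tails of the continued fraction are the quotients
`g_m = P_m / P_{m+1}`; hence `1 − c_1 x g_1⁻¹ = 1 / P_1`.

It remains to invert `A_n = P_1`, whose coefficients are signed Fibonomial coefficients. Using
`F_{a+b} = φᵃ F_b + ψᵇ F_a` one finds `A_{n+1}(x) = (1 − φⁿ⁺¹ x) A_n(ψ x)`, while the Fibonomial
Pascal rule gives `(1 − φⁿ⁺¹ x) G_{n+1}(x) = G_n(ψ x)` for `G_n = ∑ₖ C(n+k,k)_F xᵏ`. Since
`A_0 = 1 − x` and `G_0 = 1 / (1 − x)`, induction on `n` gives `A_n G_n = 1`.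
-/

/-- The Fibonomial coefficient `C(n,k)_F = ∏_{r=1}^{k} F_{n-r+1}/F_r`, as a real number.
It equals `0` when `k > n` and `1` when `k = 0`. -/
noncomputable def fibonomial (n k : ℕ) : ℝ :=
  ∏ r ∈ Finset.range k, (Nat.fib (n - r) : ℝ) / (Nat.fib (r + 1) : ℝ)

/-- `cSeq n m = c_m = (−1)^m F_{n+2−m}/F_m`. -/
noncomputable def cSeq (n m : ℕ) : ℝ :=
  (-1 : ℝ) ^ m * (Nat.fib (n + 2 - m) : ℝ) / (Nat.fib m : ℝ)

/-- The tail `g_{n+1-i}` of the continued fraction: `cfTail n i = g_{n+1-i}` where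
`g_{n+1} = 1 + c_{n+1} x` and, for `1 ≤ m ≤ n`,
`g_m = 1 + c_m x − c_{m+1} x ⬝ g_{m+1}⁻¹`. -/
noncomputable def cfTail (n : ℕ) : ℕ → PowerSeries ℝ
  | 0 => 1 + PowerSeries.C (cSeq n (n + 1)) * PowerSeries.X
  | (i + 1) =>
      1 + PowerSeries.C (cSeq n (n - i)) * PowerSeries.X
        - PowerSeries.C (cSeq n ((n - i) + 1)) * PowerSeries.X * (cfTail n i)⁻¹

open PowerSeries Finset
open scoped goldenRatio

theorem Real.coe_fib_add (a b : ℕ) :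
    (Nat.fib (a + b) : ℝ) = φ ^ a * Nat.fib b + ψ ^ b * Nat.fib a := by
  have h5 : √5 ≠ 0 := by positivity
  rw [Real.coe_fib_eq, Real.coe_fib_eq, Real.coe_fib_eq, pow_add]
  field_simp
  ring

theorem coe_fib_succ_ne_zero (k : ℕ) : (Nat.fib (k + 1) : ℝ) ≠ 0 := by
  exact_mod_cast (Nat.fib_pos.mpr k.succ_pos).ne'

theorem fibonomial_succ (n k : ℕ) :
    fibonomial n (k + 1) = fibonomial n k * (Nat.fib (n - k) / Nat.fib (k + 1)) :=
  prod_range_succ _ _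

theorem fibonomial_succ_succ (m j : ℕ) :
    fibonomial (m + 1) (j + 1) = fibonomial m j * (Nat.fib (m + 1) / Nat.fib (j + 1)) := by
  induction j with
  | zero => simp [fibonomial]
  | succ j ih =>
    rw [fibonomial_succ (m + 1), ih, fibonomial_succ m, Nat.add_sub_add_right]
    ring

theorem fibonomial_self (k : ℕ) : fibonomial k k = 1 := by
  induction k with
  | zero => simp [fibonomial]
  | succ k ih => rw [fibonomial_succ_succ, ih, one_mul, div_self (coe_fib_succ_ne_zero k)]

theorem fibonomial_pascal (m k : ℕ) :
    fibonomial (m + k + 1) (k + 1) =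
      φ ^ m * fibonomial (m + k) k + ψ ^ (k + 1) * fibonomial (m + k) (k + 1) := by
  rw [fibonomial_succ_succ, fibonomial_succ, Nat.add_sub_cancel, add_assoc m k 1,
    Real.coe_fib_add m (k + 1)]
  field_simp [coe_fib_succ_ne_zero k]

section prodSeries

variable {R : Type*} [CommSemiring R]

noncomputable def prodSeries (c : ℕ → R) (m : ℕ) : R⟦X⟧ :=
  mk fun k => ∏ j ∈ range k, c (m + j)

theorem prodSeries_eq_one_add (c : ℕ → R) (m : ℕ) :
    prodSeries c m = 1 + C (c m) * X * prodSeries c (m + 1) := by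
  ext (_ | k)
  · simp [prodSeries]
  · simp [prodSeries, mul_assoc, coeff_succ_X_mul, prod_range_succ', add_assoc, add_comm 1,
      mul_comm]

theorem prodSeries_of_eq_zero {c : ℕ → R} {m : ℕ} (h : c m = 0) : prodSeries c m = 1 := by
  rw [prodSeries_eq_one_add, h, map_zero, zero_mul, zero_mul, add_zero]

end prodSeries

theorem cSeq_self_add_two (n : ℕ) : cSeq n (n + 2) = 0 := by
  simp [cSeq]

theorem constantCoeff_cfTail (n i : ℕ) : constantCoeff (cfTail n i) = 1 := by
  cases i <;> simp [cfTail, mul_assoc]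

theorem cfTail_inv_mul_of_mul_eq {n i : ℕ} {p q : ℝ⟦X⟧} (h : cfTail n i * p = q) :
    (cfTail n i)⁻¹ * q = p := by
  rw [← h, ← mul_assoc, PowerSeries.inv_mul_cancel _ (by simp [constantCoeff_cfTail]), one_mul]

theorem cfTail_mul_prodSeries {n i m : ℕ} (h : i + m = n + 1) :
    cfTail n i * prodSeries (cSeq n) (m + 1) = prodSeries (cSeq n) m := by
  induction i generalizing m with
  | zero =>
    obtain rfl : m = n + 1 := by omega
    rw [prodSeries_eq_one_add _ (n + 1), prodSeries_of_eq_zero (cSeq_self_add_two n), cfTail,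
      mul_one, mul_one]
  | succ i ih =>
    have hinv := cfTail_inv_mul_of_mul_eq (ih (m := m + 1) (by omega))
    rw [cfTail, show n - i = m by omega, prodSeries_eq_one_add _ m]
    linear_combination
      (-(C (cSeq n (m + 1)) * X)) * hinv + prodSeries_eq_one_add (cSeq n) (m + 1)

theorem one_sub_mul_cfTail_inv_mul_prodSeries (n : ℕ) :
    (1 - C (cSeq n 1) * X * (cfTail n n)⁻¹) * prodSeries (cSeq n) 1 = 1 := by
  have hinv := cfTail_inv_mul_of_mul_eq (cfTail_mul_prodSeries (i := n) (m := 1) rfl)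
  linear_combination (-(C (cSeq n 1) * X)) * hinv + prodSeries_eq_one_add (cSeq n) 1

section oneSubCMulX

variable {R : Type*} [CommRing R] (a : R) (f : R⟦X⟧)

theorem coeff_zero_one_sub_C_mul_X_mul : coeff 0 ((1 - C a * X) * f) = coeff 0 f := by
  simp [sub_mul, mul_assoc]

theorem coeff_succ_one_sub_C_mul_X_mul (k : ℕ) :
    coeff (k + 1) ((1 - C a * X) * f) = coeff (k + 1) f - a * coeff k f := by
  rw [sub_mul, one_mul, map_sub, mul_assoc, coeff_C_mul, coeff_succ_X_mul]

end oneSubCMulX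

theorem goldenConj_pow_mul_cSeq_succ_sub {n k : ℕ} (hk : k ≤ n + 1) :
    ψ ^ (k + 1) * cSeq n (k + 1) - φ ^ (n + 1) * ψ ^ k =
      (-1) ^ (k + 1) * Nat.fib (n + 2) / Nat.fib (k + 1) := by
  symm
  obtain ⟨a, ha⟩ := Nat.exists_eq_add_of_le' hk
  have hφψ : φ ^ (n + 1) * ψ ^ k = (-1) ^ k * φ ^ a := by
    rw [ha, pow_add, mul_assoc, ← mul_pow, Real.goldenRatio_mul_goldenConj]; ring
  rw [hφψ, cSeq, show n + 2 = a + (k + 1) by omega, Nat.add_sub_cancel, Real.coe_fib_add]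
  field_simp [coe_fib_succ_ne_zero k]
  ring

theorem prod_cSeq_eq_zero {n k : ℕ} (hk : n + 1 < k) : ∏ j ∈ range k, cSeq n (1 + j) = 0 :=
  prod_eq_zero (mem_range.2 hk) (by rw [add_comm]; exact cSeq_self_add_two n)

theorem prod_cSeq_succ_succ (n k : ℕ) :
    ∏ j ∈ range (k + 1), cSeq (n + 1) (1 + j) = (∏ j ∈ range k, cSeq n (1 + j)) *
      ((-1) ^ (k + 1) * Nat.fib (n + 2) / Nat.fib (k + 1)) := by
  induction k with
  | zero => simp [cSeq]
  | succ k ih =>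
    rw [prod_range_succ, ih, prod_range_succ, cSeq, cSeq,
      show n + 1 + 2 - (1 + (k + 1)) = n + 1 - k by omega,
      show n + 2 - (1 + k) = n + 1 - k by omega, add_comm 1 k, add_comm 1 (k + 1)]
    ring

theorem prodSeries_cSeq_succ (n : ℕ) :
    prodSeries (cSeq (n + 1)) 1 =
      (1 - C (φ ^ (n + 1)) * X) * rescale ψ (prodSeries (cSeq n) 1) := by
  ext (_ | k)
  · rw [coeff_zero_one_sub_C_mul_X_mul, coeff_rescale]
    simp [prodSeries]
  rw [coeff_succ_one_sub_C_mul_X_mul, coeff_rescale, coeff_rescale]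
  simp only [prodSeries, coeff_mk]
  rw [prod_cSeq_succ_succ, prod_range_succ]
  rcases le_or_gt k (n + 1) with hk | hk
  · rw [← goldenConj_pow_mul_cSeq_succ_sub hk, add_comm 1 k]
    ring
  · simp [prod_cSeq_eq_zero hk]

theorem prodSeries_cSeq_zero : prodSeries (cSeq 0) 1 = 1 - X := by
  rw [prodSeries_eq_one_add, prodSeries_of_eq_zero (cSeq_self_add_two 0)]
  simp [cSeq, sub_eq_add_neg]

noncomputable def fibonomialSeries (n : ℕ) : ℝ⟦X⟧ :=
  mk fun k => fibonomial (n + k) k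

theorem one_sub_mul_fibonomialSeries_succ (n : ℕ) :
    (1 - C (φ ^ (n + 1)) * X) * fibonomialSeries (n + 1) = rescale ψ (fibonomialSeries n) := by
  ext (_ | k)
  · rw [coeff_zero_one_sub_C_mul_X_mul, coeff_rescale]
    simp [fibonomialSeries, fibonomial]
  rw [coeff_succ_one_sub_C_mul_X_mul, coeff_rescale]
  simp only [fibonomialSeries, coeff_mk]
  rw [← add_assoc, fibonomial_pascal, show n + (k + 1) = n + 1 + k by omega]
  ring

theorem prodSeries_cSeq_mul_fibonomialSeries (n : ℕ) :
    prodSeries (cSeq n) 1 * fibonomialSeries n = 1 := by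
  induction n with
  | zero =>
    have h : fibonomialSeries 0 = PowerSeries.mk 1 := by
      ext k
      simp [fibonomialSeries, fibonomial_self]
    rw [prodSeries_cSeq_zero, h, mul_comm, mk_one_mul_one_sub_eq_one]
  | succ n ih =>
    rw [prodSeries_cSeq_succ, mul_comm (1 - _), mul_assoc, one_sub_mul_fibonomialSeries_succ,
      ← map_mul, ih, map_one]

theorem fibonomial_continued_fraction_column_general (n k : ℕ) :
    PowerSeries.coeff k
        (1 - PowerSeries.C (cSeq n 1) * PowerSeries.X * (cfTail n n)⁻¹) =
      fibonomial (n + k) k := by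
  rw [left_inv_eq_right_inv (one_sub_mul_cfTail_inv_mul_prodSeries n)
    (prodSeries_cSeq_mul_fibonomialSeries n), fibonomialSeries, coeff_mk]

/-- `cfTail n n = g_1`; the coefficients of `1 − c_1 x ⬝ g_1⁻¹` up to degree `n+1`
are the Fibonomial coefficients `C(n+k,k)_F`. -/
theorem fibonomial_continued_fraction_column (n k : ℕ) (hk : k ≤ n + 1) :
    PowerSeries.coeff k
        (1 - PowerSeries.C (cSeq n 1) * PowerSeries.X * (cfTail n n)⁻¹) =
      fibonomial (n + k) k :=
  fibonomial_continued_fraction_column_general n k
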